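/- If G has at least one edge, then the geometric-arithmetic index of G is strictly less than its Sombor index: GA(G) < SO(G). -/
import Mathlib


open Finset Real

noncomputable def dRad {V : Type*} [Fintype V] (G : SimpleGraph V) [DecidableRel G.Adj]
    (e : Sym2 V) : ℝ :=
  Sym2.lift ⟨fun u v => Real.sqrt ((G.degree u : ℝ) ^ 2 + (G.degree v : ℝ) ^ 2),
    fun u v => by simp [add_comm]⟩ e

noncomputable def somborIndex {V : Type*} [Fintype V] [DecidableEq V] (G : SimpleGraph V)
    [DecidableRel G.Adj] : ℝ :=
  ∑ e ∈ G.edgeFinset, dRad G e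
noncomputable def gaIndex {V : Type*} [Fintype V] [DecidableEq V] (G : SimpleGraph V)
    [DecidableRel G.Adj] : ℝ :=
  ∑ e ∈ G.edgeFinset,
    Sym2.lift ⟨fun u v => 2 * Real.sqrt ((G.degree u : ℝ) * (G.degree v : ℝ))
        / ((G.degree u : ℝ) + (G.degree v : ℝ)),
      fun u v => by ring_nf⟩ e

/-- If `G` has at least one edge, then its geometric-arithmetic index is strictly less than its
Sombor index: `GA(G) < SO(G)`. -/
theorem stmt16 {V : Type*} [Fintype V] [DecidableEq V] (G : SimpleGraph V)
    [DecidableRel G.Adj] (h : G.edgeFinset.Nonempty) :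
    gaIndex G < somborIndex G := by
  unfold gaIndex somborIndex
  apply Finset.sum_lt_sum_of_nonempty h
  intro e he
  induction e using Sym2.ind with
  | _ u v =>
    rw [SimpleGraph.mem_edgeFinset] at he
    have hadj : G.Adj u v := he
    have hu : (1 : ℝ) ≤ (G.degree u : ℝ) := by
      exact_mod_cast (G.degree_pos_iff_exists_adj u).mpr ⟨v, hadj⟩
    have hv : (1 : ℝ) ≤ (G.degree v : ℝ) := by
      exact_mod_cast (G.degree_pos_iff_exists_adj v).mpr ⟨u, hadj.symm⟩
    simp only [Sym2.lift_mk, dRad]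
    set a : ℝ := (G.degree u : ℝ)
    set b : ℝ := (G.degree v : ℝ)
    have h1 : 2 * Real.sqrt (a * b) / (a + b) ≤ 1 := by
      rw [div_le_one (by linarith)]
      have hs : Real.sqrt (a * b) = Real.sqrt a * Real.sqrt b := Real.sqrt_mul (by linarith) b
      nlinarith [sq_nonneg (Real.sqrt a - Real.sqrt b), Real.sq_sqrt (show (0:ℝ) ≤ a by linarith),
        Real.sq_sqrt (show (0:ℝ) ≤ b by linarith)]
    have h2 : (1 : ℝ) < Real.sqrt (a ^ 2 + b ^ 2) := by
      have : (1 : ℝ) < Real.sqrt 2 := by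
        rw [show (1:ℝ) = Real.sqrt 1 by simp]
        exact Real.sqrt_lt_sqrt (by norm_num) (by norm_num)
      refine lt_of_lt_of_le this (Real.sqrt_le_sqrt ?_)
      nlinarith
    linarith
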